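/- arXiv:math/0406121 — 4 statements merged into one kernel-verified Lean document; each statement's English description precedes it below -/
import Mathlib

section
/- The R-transform R_μ(γ) = K_μ(γ) - 1/γ, where K_μ is the functional inverse of the Hilbert transform H_μ, is strictly increasing on its domain I' = (H_min, H_max) \ {0}. -/
/-! Put `a = K γ₁`, `b = K γ₂` and `c = ∫ (a - λ)⁻¹ (b - λ)⁻¹ dμ`. The resolvent identity gives
`γ₁ - γ₂ = (b - a) c`, and since `λ ↦ (a - λ)⁻¹` and `λ ↦ (b - λ)⁻¹` are both increasing on the
support, Chebyshev's integral inequality gives `γ₁ γ₂ < c`, strictly because `μ` is not a point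
mass. Hence `R(γ₂) - R(γ₁) = (b - a)(γ₁ γ₂ - c) / (γ₁ γ₂)`. If `γ₁, γ₂` have the same sign then
`c > 0`, so `b < a` and this is positive; if `γ₁ < 0 < γ₂`, then `a` lies left and `b` right of the
support, and it is positive again. -/

open MeasureTheory Set Filter

section Chebyshev

variable {α : Type*} [MeasurableSpace α] {μ : Measure α} {f g : α → ℝ}

theorem MeasureTheory.Measure.eq_dirac_of_ae_eq [IsProbabilityMeasure μ]
    [MeasurableSingletonClass α] {x : α} (h : ∀ᵐ y ∂μ, y = x) : μ = Measure.dirac x := by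
  have hμ : μ = μ {x} • Measure.dirac x := by
    simpa using (Measure.ae_mem_finset_iff (s := {x})).1 (by simpa using h)
  have hx : μ {x} = 1 := by simpa using congrArg (fun ν : Measure α => ν univ) hμ.symm
  rwa [hx, one_smul] at hμ

theorem integrable_prod_sub_mul_sub [IsFiniteMeasure μ] (hf : Integrable f μ)
    (hg : Integrable g μ) (hfg : Integrable (fun x => f x * g x) μ) :
    Integrable (fun p : α × α => (f p.1 - f p.2) * (g p.1 - g p.2)) (μ.prod μ) := by
  have h := (((hfg.comp_fst μ).add (hfg.comp_snd μ)).sub (hf.mul_prod hg)).sub (hg.mul_prod hf)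
  refine h.congr (ae_of_all _ fun p => ?_)
  simp only [Pi.add_apply, Pi.sub_apply]
  ring

theorem integral_prod_sub_mul_sub [IsProbabilityMeasure μ] (hf : Integrable f μ)
    (hg : Integrable g μ) (hfg : Integrable (fun x => f x * g x) μ) :
    ∫ p, (f p.1 - f p.2) * (g p.1 - g p.2) ∂μ.prod μ
      = 2 * (∫ x, f x * g x ∂μ - (∫ x, f x ∂μ) * ∫ x, g x ∂μ) := by
  have expand : (fun p : α × α => (f p.1 - f p.2) * (g p.1 - g p.2)) = fun p =>
      f p.1 * g p.1 + f p.2 * g p.2 - f p.1 * g p.2 - g p.1 * f p.2 := by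
    ext p; ring
  have h₁ := hfg.comp_fst μ
  have h₂ := hfg.comp_snd μ
  rw [expand, integral_sub, integral_sub, integral_add h₁ h₂,
    integral_fun_fst (fun x => f x * g x), integral_fun_snd (fun x => f x * g x),
    integral_prod_mul, integral_prod_mul]
  · simp only [probReal_univ, one_smul]
    ring
  · exact h₁.add h₂
  · exact hf.mul_prod hg
  · exact (h₁.add h₂).sub (hf.mul_prod hg)
  · exact hg.mul_prod hf

theorem integral_mul_integral_lt_integral_mul [IsProbabilityMeasure μ] [LinearOrder α]
    [MeasurableSingletonClass α] {s : Set α} (hs : ∀ᵐ x ∂μ, x ∈ s) (hμ : ∀ x, μ ≠ Measure.dirac x)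
    (hf : StrictMonoOn f s) (hg : StrictMonoOn g s) (hfi : Integrable f μ) (hgi : Integrable g μ)
    (hfgi : Integrable (fun x => f x * g x) μ) :
    (∫ x, f x ∂μ) * (∫ x, g x ∂μ) < ∫ x, f x * g x ∂μ := by
  set F := fun p : α × α => (f p.1 - f p.2) * (g p.1 - g p.2)
  have hs₂ : ∀ᵐ p ∂μ.prod μ, p.1 ∈ s ∧ p.2 ∈ s :=
    (Measure.quasiMeasurePreserving_fst.ae hs).and (Measure.quasiMeasurePreserving_snd.ae hs)
  have F_pos : ∀ x ∈ s, ∀ y ∈ s, x ≠ y → 0 < F (x, y) := by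
    intro x hx y hy hxy
    rcases hxy.lt_or_gt with h | h
    · exact mul_pos_of_neg_of_neg (sub_neg.2 (hf hx hy h)) (sub_neg.2 (hg hx hy h))
    · exact mul_pos (sub_pos.2 (hf hy hx h)) (sub_pos.2 (hg hy hx h))
  have F_nonneg : 0 ≤ᵐ[μ.prod μ] F := by
    filter_upwards [hs₂] with p ⟨h₁, h₂⟩
    rcases eq_or_ne p.1 p.2 with h | h
    · simp [F, h]
    · exact (F_pos _ h₁ _ h₂ h).le
  suffices 0 < ∫ p, F p ∂μ.prod μ by
    rw [integral_prod_sub_mul_sub hfi hgi hfgi] at this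
    linarith
  refine (integral_nonneg_of_ae F_nonneg).lt_of_ne fun h => ?_
  -- if `F` vanished a.e., `μ ⊗ μ` would live on the diagonal
  have diag : ∀ᵐ p ∂μ.prod μ, p.1 = p.2 := by
    filter_upwards [hs₂, ((integral_eq_zero_iff_of_nonneg_ae F_nonneg
      (integrable_prod_sub_mul_sub hfi hgi hfgi)).1 h.symm)] with p ⟨h₁, h₂⟩ hF
    by_contra hne
    exact (F_pos _ h₁ _ h₂ hne).ne' hF
  obtain ⟨x, hx⟩ := (Measure.ae_ae_of_ae_prod diag).exists
  exact hμ x (Measure.eq_dirac_of_ae_eq (hx.mono fun y hy => hy.symm))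

end Chebyshev

theorem ContinuousOn.integrable_of_ae_mem {X : Type*} [TopologicalSpace X] [MeasurableSpace X]
    [OpensMeasurableSpace X] [T2Space X] {μ : Measure X} [IsFiniteMeasure μ] {f : X → ℝ}
    {s : Set X} (hf : ContinuousOn f s) (hs : IsCompact s) (hμs : ∀ᵐ x ∂μ, x ∈ s) :
    Integrable f μ := by
  simpa [IntegrableOn, Measure.restrict_eq_self_of_ae_mem hμs] using
    hf.integrableOn_compact (μ := μ) hs

theorem continuousOn_inv_sub {a : ℝ} {s : Set ℝ} (ha : a ∉ s) :
    ContinuousOn (fun l => (a - l)⁻¹) s :=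
  (continuousOn_const.sub continuousOn_id).inv₀ fun l hl =>
    show a - l ≠ 0 from sub_ne_zero.2 fun h => ha (h ▸ hl)

theorem strictMonoOn_inv_sub {a lmin lmax : ℝ} (ha : a ∉ Icc lmin lmax) :
    StrictMonoOn (fun l => (a - l)⁻¹) (Icc lmin lmax) := by
  intro x hx y hy hxy
  simp only [mem_Icc, not_and_or, not_le] at ha
  rcases ha with h | h
  · exact (inv_lt_inv_of_neg (by linarith [hx.1]) (by linarith [hy.1])).2 (by linarith)
  · exact (inv_lt_inv₀ (by linarith [hx.2]) (by linarith [hy.2])).2 (by linarith)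

noncomputable def hilbertTransform (μ : Measure ℝ) (z : ℝ) : ℝ := ∫ l, (z - l)⁻¹ ∂μ

section HilbertTransform

variable {μ : Measure ℝ} {lmin lmax a b : ℝ}

theorem integrable_inv_sub [IsFiniteMeasure μ] (hμ : ∀ᵐ l ∂μ, l ∈ Icc lmin lmax)
    (ha : a ∉ Icc lmin lmax) : Integrable (fun l => (a - l)⁻¹) μ :=
  (continuousOn_inv_sub ha).integrable_of_ae_mem isCompact_Icc hμ

theorem integrable_inv_sub_mul_inv_sub [IsFiniteMeasure μ] (hμ : ∀ᵐ l ∂μ, l ∈ Icc lmin lmax)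
    (ha : a ∉ Icc lmin lmax) (hb : b ∉ Icc lmin lmax) :
    Integrable (fun l => (a - l)⁻¹ * (b - l)⁻¹) μ :=
  ((continuousOn_inv_sub ha).mul (continuousOn_inv_sub hb)).integrable_of_ae_mem isCompact_Icc hμ

theorem hilbertTransform_nonneg (hμ : ∀ᵐ l ∂μ, l ∈ Icc lmin lmax) (hz : lmax < a) :
    0 ≤ hilbertTransform μ a :=
  integral_nonneg_of_ae <| hμ.mono fun l hl => inv_nonneg.2 (by linarith [hl.2])

theorem hilbertTransform_nonpos (hμ : ∀ᵐ l ∂μ, l ∈ Icc lmin lmax) (hz : a < lmin) :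
    hilbertTransform μ a ≤ 0 :=
  integral_nonpos_of_ae <| hμ.mono fun l hl => inv_nonpos.2 (by linarith [hl.1])

theorem hilbertTransform_sub [IsFiniteMeasure μ] (hμ : ∀ᵐ l ∂μ, l ∈ Icc lmin lmax)
    (ha : a ∉ Icc lmin lmax) (hb : b ∉ Icc lmin lmax) :
    hilbertTransform μ a - hilbertTransform μ b = (b - a) * ∫ l, (a - l)⁻¹ * (b - l)⁻¹ ∂μ := by
  rw [hilbertTransform, hilbertTransform, ← integral_sub (integrable_inv_sub hμ ha)
    (integrable_inv_sub hμ hb), ← integral_const_mul]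
  refine integral_congr_ae (hμ.mono fun l hl => ?_)
  have : a - l ≠ 0 := sub_ne_zero.2 fun h => ha (h ▸ hl)
  have : b - l ≠ 0 := sub_ne_zero.2 fun h => hb (h ▸ hl)
  field_simp
  ring

theorem hilbertTransform_mul_lt [IsProbabilityMeasure μ] (hμ : ∀ᵐ l ∂μ, l ∈ Icc lmin lmax)
    (hnd : ∀ e, μ ≠ Measure.dirac e) (ha : a ∉ Icc lmin lmax) (hb : b ∉ Icc lmin lmax) :
    hilbertTransform μ a * hilbertTransform μ b < ∫ l, (a - l)⁻¹ * (b - l)⁻¹ ∂μ :=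
  integral_mul_integral_lt_integral_mul hμ hnd (strictMonoOn_inv_sub ha)
    (strictMonoOn_inv_sub hb) (integrable_inv_sub hμ ha) (integrable_inv_sub hμ hb)
    (integrable_inv_sub_mul_inv_sub hμ ha hb)

end HilbertTransform

theorem sub_inv_lt_sub_inv {γ₁ γ₂ a b c : ℝ} (h₁₂ : γ₁ < γ₂) (h₁ : γ₁ ≠ 0) (h₂ : γ₂ ≠ 0)
    (hsub : γ₁ - γ₂ = (b - a) * c) (hc : γ₁ * γ₂ < c) (hab : γ₁ < 0 → 0 < γ₂ → a < b) :
    a - γ₁⁻¹ < b - γ₂⁻¹ := by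
  have key : b - γ₂⁻¹ - (a - γ₁⁻¹) = (b - a) * (γ₁ * γ₂ - c) / (γ₁ * γ₂) := by
    rw [eq_div_iff (mul_ne_zero h₁ h₂)]
    field_simp
    linear_combination -hsub
  rw [← sub_pos, key]
  rcases (mul_ne_zero h₁ h₂).lt_or_gt with hneg | hpos
  · obtain ⟨hγ₁, hγ₂⟩ : γ₁ < 0 ∧ 0 < γ₂ := by
      constructor <;> by_contra! h <;> nlinarith
    exact div_pos_of_neg_of_neg
      (mul_neg_of_pos_of_neg (sub_pos.2 (hab hγ₁ hγ₂)) (by linarith)) hneg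
  · have hba : b - a < 0 := by nlinarith
    exact div_pos (mul_pos_of_neg_of_neg hba (by linarith)) hpos

theorem sub_inv_hilbertTransform_lt {μ : Measure ℝ} [IsProbabilityMeasure μ] {lmin lmax a b : ℝ}
    (hμ : ∀ᵐ l ∂μ, l ∈ Icc lmin lmax) (hnd : ∀ e, μ ≠ Measure.dirac e)
    (ha : a ∉ Icc lmin lmax) (hb : b ∉ Icc lmin lmax)
    (hHa : hilbertTransform μ a ≠ 0) (hHb : hilbertTransform μ b ≠ 0)
    (hlt : hilbertTransform μ a < hilbertTransform μ b) :
    a - (hilbertTransform μ a)⁻¹ < b - (hilbertTransform μ b)⁻¹ := by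
  refine sub_inv_lt_sub_inv hlt hHa hHb (hilbertTransform_sub hμ ha hb)
    (hilbertTransform_mul_lt hμ hnd ha hb) fun hneg hpos => ?_
  have ha' : a < lmin := by
    by_contra! h
    exact hneg.not_ge (hilbertTransform_nonneg hμ (not_le.1 fun h' => ha ⟨h, h'⟩))
  have hb' : lmax < b := by
    by_contra! h
    exact hpos.not_ge (hilbertTransform_nonpos hμ (not_le.1 fun h' => hb ⟨h', h⟩))
  obtain ⟨l, hl⟩ := hμ.exists
  linarith [hl.1, hl.2]

theorem R_transform_strictMono_general
    (μ : Measure ℝ) [IsProbabilityMeasure μ] (lmin lmax : ℝ)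
    (hsupp : μ (Set.Icc lmin lmax)ᶜ = 0)
    (hnd : ∀ e : ℝ, μ ≠ Measure.dirac e)
    (Hmin Hmax : EReal)
    (K : ℝ → ℝ)
    (hK : ∀ γ ∈ {γ : ℝ | Hmin < (γ : EReal) ∧ (γ : EReal) < Hmax ∧ γ ≠ 0},
      K γ ∉ Set.Icc lmin lmax ∧ ∫ l, (K γ - l)⁻¹ ∂μ = γ) :
    StrictMonoOn (fun γ : ℝ => K γ - γ⁻¹)
      {γ : ℝ | Hmin < (γ : EReal) ∧ (γ : EReal) < Hmax ∧ γ ≠ 0} := by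
  intro γ₁ hγ₁ γ₂ hγ₂ hlt
  obtain ⟨ha, hHa⟩ : K γ₁ ∉ Icc lmin lmax ∧ hilbertTransform μ (K γ₁) = γ₁ := hK γ₁ hγ₁
  obtain ⟨hb, hHb⟩ : K γ₂ ∉ Icc lmin lmax ∧ hilbertTransform μ (K γ₂) = γ₂ := hK γ₂ hγ₂
  have key := sub_inv_hilbertTransform_lt hsupp hnd ha hb
  rw [hHa, hHb] at key
  exact key hγ₁.2.2 hγ₂.2.2 hlt

/-- The R-transform `R_μ(γ) = K_μ(γ) - 1/γ`, where `K_μ` is the functional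
inverse of the Hilbert transform `H_μ(z) = ∫ 1/(z-λ) dμ(λ)`, is strictly
increasing on its domain `I' = (H_min, H_max) \ {0}`.  Here `μ` is a compactly
supported probability measure (not a Dirac mass) with support contained in
`[λmin, λmax]`, `H_min` and `H_max` are the (possibly infinite) one-sided limits
of `H_μ` at `λmin` and `λmax`, and `K_μ` is encoded by the hypothesis that for
every `γ ∈ I'`, `K γ` lies outside `[λmin, λmax]` and `H_μ(K γ) = γ`. -/
theorem R_transform_strictMono
    (μ : Measure ℝ) [IsProbabilityMeasure μ] (lmin lmax : ℝ) (hll : lmin ≤ lmax)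
    (hsupp : μ (Set.Icc lmin lmax)ᶜ = 0)
    (hnd : ∀ e : ℝ, μ ≠ Measure.dirac e)
    (Hmin Hmax : EReal)
    (hHmin : Tendsto (fun z : ℝ => ((∫ l, (z - l)⁻¹ ∂μ : ℝ) : EReal))
      (nhdsWithin lmin (Set.Iio lmin)) (nhds Hmin))
    (hHmax : Tendsto (fun z : ℝ => ((∫ l, (z - l)⁻¹ ∂μ : ℝ) : EReal))
      (nhdsWithin lmax (Set.Ioi lmax)) (nhds Hmax))
    (K : ℝ → ℝ)
    (hK : ∀ γ ∈ {γ : ℝ | Hmin < (γ : EReal) ∧ (γ : EReal) < Hmax ∧ γ ≠ 0},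
      K γ ∉ Set.Icc lmin lmax ∧ ∫ l, (K γ - l)⁻¹ ∂μ = γ) :
    StrictMonoOn (fun γ : ℝ => K γ - γ⁻¹)
      {γ : ℝ | Hmin < (γ : EReal) ∧ (γ : EReal) < Hmax ∧ γ ≠ 0} :=
  R_transform_strictMono_general μ lmin lmax hsupp hnd Hmin Hmax K hK
end

section
/- Spherical integrals are Lipschitz in the small-rank matrix: for any N, any Hermitian (or symmetric) N×N matrices D, D', and any E with operator norm ‖E‖_∞ ≤ c, one has |N^{-1} log I_N(D,E) − N^{-1} log I_N(D',E)| ≤ c · tr|D − D'|, where I_N(D,E) = ∫ exp{N tr(U D U* E)} dm_N(U) and m_N is Haar measure on the orthogonal (or unitary) group. -/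
open MeasureTheory Real

instance matrixMeasurableSpace (N : ℕ) : MeasurableSpace (Matrix (Fin N) (Fin N) ℝ) :=
  borel _

instance matrixBorelSpace (N : ℕ) : BorelSpace (Matrix (Fin N) (Fin N) ℝ) := ⟨rfl⟩

section Aux

open Matrix

lemma aux_cs_bound (N : ℕ) (c : ℝ) (E : Matrix (Fin N) (Fin N) ℝ)
    (hE : ∀ x : Fin N → ℝ,
      Real.sqrt (∑ i, (E.mulVec x i) ^ 2) ≤ c * Real.sqrt (∑ i, (x i) ^ 2))
    (x : Fin N → ℝ) (hx : ∑ i, (x i) ^ 2 = 1) :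
    |∑ k, x k * E.mulVec x k| ≤ c := by
  have h1 : (∑ k, x k * E.mulVec x k) ^ 2 ≤ (∑ k, (x k) ^ 2) * (∑ k, (E.mulVec x k) ^ 2) :=
    Finset.sum_mul_sq_le_sq_mul_sq Finset.univ x (E.mulVec x)
  have h2 := hE x
  rw [hx, Real.sqrt_one, mul_one] at h2
  rw [← Real.sqrt_sq_eq_abs]
  calc Real.sqrt ((∑ k, x k * E.mulVec x k) ^ 2)
      ≤ Real.sqrt ((∑ k, (x k) ^ 2) * (∑ k, (E.mulVec x k) ^ 2)) := Real.sqrt_le_sqrt h1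
    _ = Real.sqrt (∑ k, (E.mulVec x k) ^ 2) := by rw [hx, one_mul]
    _ ≤ c := h2

lemma aux_diag_entry (N : ℕ) (E W : Matrix (Fin N) (Fin N) ℝ) (j : Fin N) :
    (star W * E * W) j j = ∑ k, W k j * E.mulVec (fun i => W i j) k := by
  simp only [Matrix.mul_apply, Matrix.star_apply, star_trivial, Matrix.mulVec,
    dotProduct, Finset.sum_mul, Finset.mul_sum]
  rw [Finset.sum_comm]
  congr 1; ext k; congr 1; ext i; ring

lemma aux_col_norm (N : ℕ) (W : Matrix (Fin N) (Fin N) ℝ) (hW : star W * W = 1) (j : Fin N) :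
    ∑ k, (W k j) ^ 2 = 1 := by
  have := congrFun (congrFun hW j) j
  simp only [Matrix.mul_apply, Matrix.star_apply, star_trivial, Matrix.one_apply_eq] at this
  rw [← this]
  congr 1; ext k; ring

lemma aux_trace_bound (N : ℕ) (c : ℝ) (E : Matrix (Fin N) (Fin N) ℝ)
    (hE : ∀ x : Fin N → ℝ,
      Real.sqrt (∑ i, (E.mulVec x i) ^ 2) ≤ c * Real.sqrt (∑ i, (x i) ^ 2))
    (lam : Fin N → ℝ) (W : Matrix (Fin N) (Fin N) ℝ) (hW : star W * W = 1) :
    |(W * Matrix.diagonal lam * star W * E).trace| ≤ c * ∑ i, |lam i| := by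
  have cs : ∀ j, |(star W * E * W) j j| ≤ c := by
    intro j
    rw [aux_diag_entry]
    exact aux_cs_bound N c E hE _ (aux_col_norm N W hW j)
  have ht : (W * Matrix.diagonal lam * star W * E).trace
      = ∑ j, lam j * (star W * E * W) j j := by
    rw [show W * Matrix.diagonal lam * star W * E
        = W * (Matrix.diagonal lam * (star W * E)) by noncomm_ring,
      Matrix.trace_mul_comm,
      show Matrix.diagonal lam * (star W * E) * W
        = Matrix.diagonal lam * (star W * E * W) by noncomm_ring]
    simp [Matrix.trace, Matrix.diag, Matrix.diagonal_mul]
  rw [ht]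
  calc |∑ j, lam j * (star W * E * W) j j| ≤ ∑ j, |lam j * (star W * E * W) j j| :=
        Finset.abs_sum_le_sum_abs _ _
    _ ≤ ∑ j, |lam j| * c := by
        apply Finset.sum_le_sum
        intro j _
        rw [abs_mul]
        exact mul_le_mul_of_nonneg_left (cs j) (abs_nonneg _)
    _ = c * ∑ i, |lam i| := by rw [← Finset.sum_mul, mul_comm]

lemma aux_key_bound (N : ℕ) (c : ℝ) (E : Matrix (Fin N) (Fin N) ℝ)
    (hE : ∀ x : Fin N → ℝ,
      Real.sqrt (∑ i, (E.mulVec x i) ^ 2) ≤ c * Real.sqrt (∑ i, (x i) ^ 2))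
    (S : Matrix (Fin N) (Fin N) ℝ) (hS : S.IsHermitian)
    (U : Matrix.orthogonalGroup (Fin N) ℝ) :
    |((U : Matrix (Fin N) (Fin N) ℝ) * S * star (U : Matrix (Fin N) (Fin N) ℝ) * E).trace|
      ≤ c * ∑ i, |hS.eigenvalues i| := by
  set V : Matrix (Fin N) (Fin N) ℝ := (hS.eigenvectorUnitary : Matrix (Fin N) (Fin N) ℝ)
  have hSpec : S = V * Matrix.diagonal hS.eigenvalues * star V := by
    have := hS.spectral_theorem
    simpa using this
  set Uc : Matrix (Fin N) (Fin N) ℝ := (U : Matrix (Fin N) (Fin N) ℝ)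
  have hU1 : star Uc * Uc = 1 := U.prop.1
  have hV1 : star V * V = 1 := hS.eigenvectorUnitary.prop.1
  have hW : star (Uc * V) * (Uc * V) = 1 := by
    rw [StarMul.star_mul, mul_assoc, ← mul_assoc (star Uc), hU1, one_mul, hV1]
  have heq : Uc * (V * Matrix.diagonal hS.eigenvalues * star V) * star Uc * E
      = (Uc * V) * Matrix.diagonal hS.eigenvalues * star (Uc * V) * E := by
    rw [StarMul.star_mul]
    noncomm_ring
  rw [show Uc * S * star Uc * E = Uc * (V * Matrix.diagonal hS.eigenvalues * star V) * star Uc * E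
    by rw [← hSpec], heq]
  exact aux_trace_bound N c E hE _ _ hW

lemma aux_measurable (N : ℕ) (D E : Matrix (Fin N) (Fin N) ℝ) :
    Measurable (fun U : Matrix.orthogonalGroup (Fin N) ℝ =>
      ((U : Matrix (Fin N) (Fin N) ℝ) * D * star (U : Matrix (Fin N) (Fin N) ℝ) * E).trace) := by
  have hc : Continuous (fun M : Matrix (Fin N) (Fin N) ℝ => (M * D * star M * E).trace) :=
    (((continuous_id.matrix_mul continuous_const).matrix_mul
      continuous_id.matrix_conjTranspose).matrix_mul continuous_const).matrix_trace
  exact hc.measurable.comp measurable_subtype_coe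

lemma aux_integrable {α : Type*} [MeasurableSpace α] (m : Measure α) [IsProbabilityMeasure m]
    (f : α → ℝ) (hm : Measurable f) (B : ℝ) (hb : ∀ x, |f x| ≤ B) :
    Integrable (fun x => Real.exp (f x)) m := by
  apply (integrable_const (Real.exp B)).mono' hm.exp.aestronglyMeasurable
  filter_upwards with x
  rw [Real.norm_eq_abs, Real.abs_exp]
  exact Real.exp_le_exp.2 ((le_abs_self _).trans (hb x))

lemma aux_log_diff {I₁ I₂ K : ℝ} (h1 : 0 < I₁) (h2 : 0 < I₂)
    (ha : I₁ ≤ Real.exp K * I₂) (hb : I₂ ≤ Real.exp K * I₁) :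
    |Real.log I₁ - Real.log I₂| ≤ K := by
  rw [abs_sub_le_iff]
  constructor
  · have := Real.log_le_log h1 ha
    rw [Real.log_mul (Real.exp_ne_zero K) h2.ne', Real.log_exp] at this
    linarith
  · have := Real.log_le_log h2 hb
    rw [Real.log_mul (Real.exp_ne_zero K) h1.ne', Real.log_exp] at this
    linarith

end Aux

/-- Spherical integrals are Lipschitz in the small-rank matrix: for the spherical
integral `I_N(D,E) = ∫ exp{N tr(U D U* E)} dm_N(U)` with `m_N` the Haar
(probability) measure on the orthogonal group, any symmetric matrices `D`, `D'`
and any `E` of operator norm at most `c`,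
`|N⁻¹ log I_N(D,E) − N⁻¹ log I_N(D',E)| ≤ c · tr|D − D'|`,
where `tr|D − D'|` is the sum of the absolute values of the eigenvalues of
`D − D'`. -/
theorem spherical_integral_lipschitz_in_D
    (N : ℕ) (hN : 0 < N)
    (m : Measure (Matrix.orthogonalGroup (Fin N) ℝ)) [IsProbabilityMeasure m]
    (c : ℝ) (hc : 0 ≤ c) (D D' E : Matrix (Fin N) (Fin N) ℝ)
    (hD : D.IsHermitian) (hD' : D'.IsHermitian) (hS : (D - D').IsHermitian)
    (hE : ∀ x : Fin N → ℝ,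
      Real.sqrt (∑ i, (E.mulVec x i) ^ 2) ≤ c * Real.sqrt (∑ i, (x i) ^ 2)) :
    |(1 / (N : ℝ)) * Real.log
        (∫ U, Real.exp ((N : ℝ) * ((U : Matrix (Fin N) (Fin N) ℝ) * D *
          star (U : Matrix (Fin N) (Fin N) ℝ) * E).trace) ∂m)
      - (1 / (N : ℝ)) * Real.log
        (∫ U, Real.exp ((N : ℝ) * ((U : Matrix (Fin N) (Fin N) ℝ) * D' *
          star (U : Matrix (Fin N) (Fin N) ℝ) * E).trace) ∂m)|
      ≤ c * ∑ i, |hS.eigenvalues i| := by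
  set f : Matrix.orthogonalGroup (Fin N) ℝ → ℝ := fun U =>
    (N : ℝ) * ((U : Matrix (Fin N) (Fin N) ℝ) * D *
      star (U : Matrix (Fin N) (Fin N) ℝ) * E).trace with hf
  set g : Matrix.orthogonalGroup (Fin N) ℝ → ℝ := fun U =>
    (N : ℝ) * ((U : Matrix (Fin N) (Fin N) ℝ) * D' *
      star (U : Matrix (Fin N) (Fin N) ℝ) * E).trace with hg
  have hNpos : (0 : ℝ) < N := Nat.cast_pos.2 hN
  -- bounds on f and g
  have hfb : ∀ U, |f U| ≤ (N : ℝ) * (c * ∑ i, |hD.eigenvalues i|) := by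
    intro U
    rw [hf, abs_mul, abs_of_pos hNpos]
    exact mul_le_mul_of_nonneg_left (aux_key_bound N c E hE D hD U) hNpos.le
  have hgb : ∀ U, |g U| ≤ (N : ℝ) * (c * ∑ i, |hD'.eigenvalues i|) := by
    intro U
    rw [hg, abs_mul, abs_of_pos hNpos]
    exact mul_le_mul_of_nonneg_left (aux_key_bound N c E hE D' hD' U) hNpos.le
  -- difference bound
  set K : ℝ := (N : ℝ) * (c * ∑ i, |hS.eigenvalues i|) with hK
  have hfg : ∀ U, |f U - g U| ≤ K := by
    intro U
    have hdiff : f U - g U = (N : ℝ) * ((U : Matrix (Fin N) (Fin N) ℝ) * (D - D') *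
        star (U : Matrix (Fin N) (Fin N) ℝ) * E).trace := by
      rw [hf, hg]
      simp only
      rw [← mul_sub]
      congr 1
      rw [← Matrix.trace_sub]
      congr 1
      noncomm_ring
    rw [hdiff, abs_mul, abs_of_pos hNpos, hK]
    exact mul_le_mul_of_nonneg_left (aux_key_bound N c E hE (D - D') hS U) hNpos.le
  -- measurability and integrability
  have hmf : Measurable f := (measurable_const.mul (aux_measurable N D E))
  have hmg : Measurable g := (measurable_const.mul (aux_measurable N D' E))
  have hif : Integrable (fun U => Real.exp (f U)) m := aux_integrable m f hmf _ hfb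
  have hig : Integrable (fun U => Real.exp (g U)) m := aux_integrable m g hmg _ hgb
  -- positivity
  have hne : NeZero m := ⟨IsProbabilityMeasure.ne_zero m⟩
  have hIf : 0 < ∫ U, Real.exp (f U) ∂m := integral_exp_pos hif
  have hIg : 0 < ∫ U, Real.exp (g U) ∂m := integral_exp_pos hig
  -- comparison of integrals
  have hcomp : ∀ (F G : Matrix.orthogonalGroup (Fin N) ℝ → ℝ),
      Integrable (fun U => Real.exp (F U)) m → Integrable (fun U => Real.exp (G U)) m →
      (∀ U, F U - G U ≤ K) →
      ∫ U, Real.exp (F U) ∂m ≤ Real.exp K * ∫ U, Real.exp (G U) ∂m := by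
    intro F G hiF hiG hd
    rw [← integral_const_mul]
    apply integral_mono hiF (hiG.const_mul _)
    intro U
    show Real.exp (F U) ≤ Real.exp K * Real.exp (G U)
    rw [← Real.exp_add]
    exact Real.exp_le_exp.2 (by linarith [hd U])
  have h1 : ∫ U, Real.exp (f U) ∂m ≤ Real.exp K * ∫ U, Real.exp (g U) ∂m :=
    hcomp f g hif hig (fun U => (le_abs_self _).trans (hfg U))
  have h2 : ∫ U, Real.exp (g U) ∂m ≤ Real.exp K * ∫ U, Real.exp (f U) ∂m := by
    apply hcomp g f hig hif
    intro U
    calc g U - f U ≤ |g U - f U| := le_abs_self _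
      _ = |f U - g U| := abs_sub_comm _ _
      _ ≤ K := hfg U
  have hlog := aux_log_diff hIf hIg h1 h2
  rw [← mul_sub, abs_mul, abs_of_pos (by positivity : (0:ℝ) < 1 / (N:ℝ))]
  calc (1 / (N : ℝ)) * |Real.log (∫ U, Real.exp (f U) ∂m) - Real.log (∫ U, Real.exp (g U) ∂m)|
      ≤ (1 / (N : ℝ)) * K := mul_le_mul_of_nonneg_left hlog (by positivity)
    _ = c * ∑ i, |hS.eigenvalues i| := by
        rw [hK]
        field_simp
end

section
/- Let μ be a compactly supported probability measure on ℝ, α ∈ (λ_min, λ_max), and define h_α(κ) = ∫ log((κ−λ)/(κ−α)) dμ(λ) for κ ∈ [λ_min, λ_max]^c. If α ∈ [α_min, α_max] where α_min = λ_min − 1/H_min and α_max = λ_max − 1/H_max, then h_α attains its supremum over [λ_min, λ_max]^c at the unique critical point κ₀ = K_μ(Q_μ(α)), characterized by H_μ(κ₀) = 1/(κ₀ − α). -/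
open MeasureTheory Set

/-- Sign lemma: for `κ` outside `[lmin,lmax]` and `l` inside, with `α` strictly
inside, the ratio `(κ-l)/(κ-α)` is positive. -/
lemma hα_div_pos {lmin lmax α κ l : ℝ}
    (hα : α ∈ Set.Ioo lmin lmax) (hκ : κ ∉ Set.Icc lmin lmax)
    (hl : l ∈ Set.Icc lmin lmax) : 0 < (κ - l) / (κ - α) := by
  obtain ⟨hl1, hl2⟩ := hl
  obtain ⟨ha1, ha2⟩ := hα
  rcases lt_or_ge κ lmin with h | h
  · exact div_pos_of_neg_of_neg (by linarith) (by linarith)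
  · have h2 : lmax < κ := by
      by_contra hc; push_neg at hc; exact hκ ⟨h, hc⟩
    exact div_pos (by linarith) (by linarith)

lemma hα_sub_ne {lmin lmax κ l : ℝ} (hκ : κ ∉ Set.Icc lmin lmax)
    (hl : l ∈ Set.Icc lmin lmax) : κ - l ≠ 0 := by
  intro h
  exact hκ (by rwa [sub_eq_zero.mp h])

/-- Integrability of a function continuous on the support interval. -/
lemma hα_integrable {lmin lmax : ℝ} (μ : Measure ℝ) [IsFiniteMeasure μ]
    (hsupp : μ (Set.Icc lmin lmax)ᶜ = 0) (f : ℝ → ℝ) (hm : Measurable f)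
    (hc : ContinuousOn f (Set.Icc lmin lmax)) : Integrable f μ := by
  obtain ⟨C, hC⟩ := (isCompact_Icc (a := lmin) (b := lmax)).exists_bound_of_continuousOn hc
  have hae : ∀ᵐ l ∂μ, l ∈ Set.Icc lmin lmax := by
    rw [MeasureTheory.ae_iff]
    simpa [Set.compl_def] using hsupp
  exact (integrable_const C).mono' hm.aestronglyMeasurable
    (hae.mono fun l hl => hC l hl)

/-- The key strict inequality. -/
lemma hα_strict (μ : Measure ℝ) [IsProbabilityMeasure μ] (lmin lmax α κ κ₀ : ℝ)
    (hll : lmin < lmax) (hsupp : μ (Set.Icc lmin lmax)ᶜ = 0)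
    (hedge : ∀ ε > 0,
      0 < μ (Set.Icc lmin (lmin + ε)) ∧ 0 < μ (Set.Icc (lmax - ε) lmax))
    (hα : α ∈ Set.Ioo lmin lmax)
    (hκ : κ ∉ Set.Icc lmin lmax) (hκ₀ : κ₀ ∉ Set.Icc lmin lmax)
    (hcrit : (∫ l, (κ₀ - l)⁻¹ ∂μ) = (κ₀ - α)⁻¹)
    (hne : κ ≠ κ₀) :
    (∫ l, Real.log ((κ - l) / (κ - α)) ∂μ)
      < ∫ l, Real.log ((κ₀ - l) / (κ₀ - α)) ∂μ := by
  have hαIcc : α ∈ Set.Icc lmin lmax := ⟨le_of_lt hα.1, le_of_lt hα.2⟩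
  have hκα : κ - α ≠ 0 := hα_sub_ne hκ hαIcc
  have hκ₀α : κ₀ - α ≠ 0 := hα_sub_ne hκ₀ hαIcc
  set f : ℝ → ℝ := fun l => Real.log ((κ - l) / (κ - α)) with hf
  set f₀ : ℝ → ℝ := fun l => Real.log ((κ₀ - l) / (κ₀ - α)) with hf₀
  set G : ℝ → ℝ := fun l => ((κ - κ₀) / (κ - α)) * ((κ₀ - α) * (κ₀ - l)⁻¹ - 1) with hG
  -- pointwise inequalities on the support
  have key : ∀ l ∈ Set.Icc lmin lmax, f l - f₀ l ≤ G l ∧ (l ≠ α → f l - f₀ l < G l) := by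
    intro l hl
    have hA : 0 < (κ - l) / (κ - α) := hα_div_pos hα hκ hl
    have hB : 0 < (κ₀ - l) / (κ₀ - α) := hα_div_pos hα hκ₀ hl
    have hκl : κ - l ≠ 0 := hα_sub_ne hκ hl
    have hκ₀l : κ₀ - l ≠ 0 := hα_sub_ne hκ₀ hl
    have hlog : f l - f₀ l = Real.log (((κ - l) / (κ - α)) / ((κ₀ - l) / (κ₀ - α))) := by
      rw [Real.log_div (ne_of_gt hA) (ne_of_gt hB)]
    have hR : 0 < ((κ - l) / (κ - α)) / ((κ₀ - l) / (κ₀ - α)) := div_pos hA hB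
    have hEq : ((κ - l) / (κ - α)) / ((κ₀ - l) / (κ₀ - α)) - 1 = G l := by
      simp only [hG]
      field_simp
      ring
    constructor
    · rw [hlog, ← hEq]
      exact Real.log_le_sub_one_of_pos hR
    · intro hlα
      rw [hlog, ← hEq]
      refine Real.log_lt_sub_one_of_pos hR ?_
      intro h1
      have h2 : (κ - l) * (κ₀ - α) = (κ₀ - l) * (κ - α) := by
        field_simp at h1
        linarith [h1]
      have h3 : (κ - κ₀) * (l - α) = 0 := by nlinarith [h2]
      rcases mul_eq_zero.mp h3 with h | h
      · exact hne (by linarith)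
      · exact hlα (by linarith)
  have hae : ∀ᵐ l ∂μ, l ∈ Set.Icc lmin lmax := by
    rw [MeasureTheory.ae_iff]
    simpa [Set.compl_def] using hsupp
  -- integrabilities
  have hintf : Integrable f μ := by
    refine hα_integrable μ hsupp f (Real.measurable_log.comp (by fun_prop)) ?_
    refine ContinuousOn.log (by fun_prop) fun l hl => ne_of_gt (hα_div_pos hα hκ hl)
  have hintf₀ : Integrable f₀ μ := by
    refine hα_integrable μ hsupp f₀ (Real.measurable_log.comp (by fun_prop)) ?_
    refine ContinuousOn.log (by fun_prop) fun l hl => ne_of_gt (hα_div_pos hα hκ₀ hl)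
  have hinv : Integrable (fun l => (κ₀ - l)⁻¹) μ := by
    refine hα_integrable μ hsupp _ (by fun_prop) ?_
    exact ContinuousOn.inv₀ (by fun_prop) fun l hl => hα_sub_ne hκ₀ hl
  have hintG : Integrable G μ := by
    refine Integrable.const_mul ?_ _
    exact ((hinv.const_mul _).sub (integrable_const 1))
  -- ∫ G = 0
  have hGzero : (∫ l, G l ∂μ) = 0 := by
    simp only [hG]
    rw [integral_const_mul, integral_sub (hinv.const_mul _) (integrable_const 1),
      integral_const_mul, hcrit, integral_const]
    simp [mul_inv_cancel₀ hκ₀α]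
  -- the difference function
  set D : ℝ → ℝ := fun l => G l - (f l - f₀ l) with hD
  have hintD : Integrable D μ := hintG.sub (hintf.sub hintf₀)
  have hDnn : 0 ≤ᵐ[μ] D := hae.mono fun l hl => sub_nonneg.mpr (key l hl).1
  -- positivity of ∫ D using the edge mass
  have hε : (0:ℝ) < (α - lmin) / 2 := by have := hα.1; linarith
  obtain ⟨hm1, _⟩ := hedge _ hε
  have hSsub : Set.Icc lmin (lmin + (α - lmin) / 2) ⊆ Function.support D := by
    intro l hl
    have hlIcc : l ∈ Set.Icc lmin lmax := ⟨hl.1, by have := hα.2; have := hl.2; linarith⟩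
    have hlα : l ≠ α := by have := hl.2; intro h; subst h; linarith
    exact ne_of_gt (sub_pos.mpr ((key l hlIcc).2 hlα))
  have hDpos : 0 < ∫ l, D l ∂μ := by
    rw [integral_pos_iff_support_of_nonneg_ae hDnn hintD]
    exact lt_of_lt_of_le hm1 (measure_mono hSsub)
  have e1 : (∫ l, D l ∂μ) = (∫ l, G l ∂μ) - ∫ l, (f l - f₀ l) ∂μ :=
    integral_sub hintG (hintf.sub hintf₀)
  have e2 : (∫ l, (f l - f₀ l) ∂μ) = (∫ l, f l ∂μ) - ∫ l, f₀ l ∂μ :=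
    integral_sub hintf hintf₀
  rw [e1, e2, hGzero] at hDpos
  linarith

/-- Let `μ` be a compactly supported probability measure with support edges
`λmin < λmax`, `α ∈ (λmin, λmax)`, and
`h_α(κ) = ∫ log((κ−λ)/(κ−α)) dμ(λ)` for `κ ∈ [λmin, λmax]ᶜ`.  If
`α ∈ [α_min, α_max]` — equivalently, if there exists a critical point
`κ₀ = K_μ(Q_μ(α)) ∉ [λmin, λmax]` characterized by `H_μ(κ₀) = 1/(κ₀ − α)` —
then `h_α` attains its supremum over `[λmin, λmax]ᶜ` at `κ₀`, and `κ₀` is the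
unique such critical point. -/
theorem h_alpha_max_at_critical_point
    (μ : Measure ℝ) [IsProbabilityMeasure μ] (lmin lmax α κ₀ : ℝ)
    (hll : lmin < lmax) (hsupp : μ (Set.Icc lmin lmax)ᶜ = 0)
    (hedge : ∀ ε > 0,
      0 < μ (Set.Icc lmin (lmin + ε)) ∧ 0 < μ (Set.Icc (lmax - ε) lmax))
    (hα : α ∈ Set.Ioo lmin lmax)
    (hκ₀ : κ₀ ∉ Set.Icc lmin lmax)
    (hcrit : (∫ l, (κ₀ - l)⁻¹ ∂μ) = (κ₀ - α)⁻¹) :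
    (∀ κ, κ ∉ Set.Icc lmin lmax →
        (∫ l, Real.log ((κ - l) / (κ - α)) ∂μ)
          ≤ ∫ l, Real.log ((κ₀ - l) / (κ₀ - α)) ∂μ) ∧
      ∀ κ, κ ∉ Set.Icc lmin lmax →
        (∫ l, (κ - l)⁻¹ ∂μ) = (κ - α)⁻¹ → κ = κ₀ := by
  constructor
  · intro κ hκ
    by_cases hne : κ = κ₀
    · subst hne; exact le_refl _
    · exact le_of_lt (hα_strict μ lmin lmax α κ κ₀ hll hsupp hedge hα hκ hκ₀ hcrit hne)
  · intro κ hκ hcritκ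
    by_contra hne
    have h1 := hα_strict μ lmin lmax α κ κ₀ hll hsupp hedge hα hκ hκ₀ hcrit hne
    have h2 := hα_strict μ lmin lmax α κ₀ κ hll hsupp hedge hα hκ₀ hκ hcritκ (Ne.symm hne)
    linarith
end

section
/- The map V ↦ N^{-1} log I_N(θ, A + V B V*) is Lipschitz on the set of N×N contractions: for W, W̃ with W W* ≤ I and W̃ W̃* ≤ I, |N^{-1} log I_N(θ, A + W B W*) − N^{-1} log I_N(θ, A + W̃ B W̃*)| ≤ 2θ‖B‖_∞ (Σ_{i,j}|w_{ij} − w̃_{ij}|²)^{1/2}, where I_N(θ,E) = ∫ e^{θ N (UEU*)_{11}} dm_N^{(1)}(U). -/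
/-! For a unit vector `v`, the quadratic form of `W B Wᵀ - W' B W'ᵀ` splits as
`v ⬝ (W - W') B Wᵀ v + v ⬝ W' B (W - W')ᵀ v`; by Cauchy–Schwarz each term is at most
`b ‖W - W'‖_F`, because `‖vᵀ X‖ ≤ 1` for a contraction `X` and `‖vᵀ D‖ ≤ ‖D‖_F`.
Taking for `v` the first row of `U ∈ O(N)`, the two exponents differ by at most
`2 θ N b ‖W - W'‖_F` uniformly in `U`, and `f ↦ log ∫ exp f` is `1`-Lipschitz for the sup norm. -/

open MeasureTheory Real Matrix

section QuadraticForm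

variable {m n : Type*} [Fintype m] [Fintype n]

lemma abs_dotProduct_le_sqrt_mul_sqrt (x y : n → ℝ) :
    |x ⬝ᵥ y| ≤ √(∑ i, x i ^ 2) * √(∑ i, y i ^ 2) := by
  rw [← Real.sqrt_mul (Finset.sum_nonneg fun i _ => sq_nonneg _)]
  exact Real.abs_le_sqrt (Finset.sum_mul_sq_le_sq_mul_sq _ x y)

lemma sum_sq_vecMul_le (v : m → ℝ) (D : Matrix m n ℝ) :
    ∑ j, (v ᵥ* D) j ^ 2 ≤ (∑ i, v i ^ 2) * ∑ i, ∑ j, D i j ^ 2 := by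
  rw [Finset.sum_comm (f := fun i j => D i j ^ 2), Finset.mul_sum]
  exact Finset.sum_le_sum fun j _ => Finset.sum_mul_sq_le_sq_mul_sq _ v fun i => D i j

lemma sum_sq_vecMul_le_of_posSemidef [DecidableEq m] {W : Matrix m n ℝ}
    (hW : (1 - W * Wᵀ).PosSemidef) (v : m → ℝ) :
    ∑ j, (v ᵥ* W) j ^ 2 ≤ ∑ i, v i ^ 2 := by
  have h := hW.dotProduct_mulVec_nonneg v
  rw [star_trivial, sub_mulVec, one_mulVec, dotProduct_sub, ← mulVec_mulVec, dotProduct_mulVec,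
    mulVec_transpose, sub_nonneg] at h
  simpa only [dotProduct, sq] using h

lemma abs_dotProduct_mul_mul_transpose_mulVec_le {B : Matrix n n ℝ} {b : ℝ}
    (hB : ∀ x : n → ℝ, √(∑ i, (B *ᵥ x) i ^ 2) ≤ b * √(∑ i, x i ^ 2))
    (X Y : Matrix m n ℝ) (v : m → ℝ) :
    |v ⬝ᵥ (X * B * Yᵀ) *ᵥ v| ≤ √(∑ j, (v ᵥ* X) j ^ 2) * (b * √(∑ j, (v ᵥ* Y) j ^ 2)) := by
  rw [← mulVec_mulVec, ← mulVec_mulVec, mulVec_transpose, dotProduct_mulVec]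
  exact (abs_dotProduct_le_sqrt_mul_sqrt _ _).trans
    (mul_le_mul_of_nonneg_left (hB _) (Real.sqrt_nonneg _))

lemma abs_dotProduct_mulVec_le_of_sum_sq_eq_one (E : Matrix n n ℝ) {v : n → ℝ}
    (hv : ∑ i, v i ^ 2 = 1) : |v ⬝ᵥ E *ᵥ v| ≤ √(∑ i, ∑ j, E i j ^ 2) := by
  rw [dotProduct_mulVec]
  refine (abs_dotProduct_le_sqrt_mul_sqrt _ _).trans ?_
  rw [hv, Real.sqrt_one, mul_one]
  exact Real.sqrt_le_sqrt ((sum_sq_vecMul_le v E).trans_eq (by rw [hv, one_mul]))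

lemma abs_dotProduct_sub_mulVec_le [DecidableEq m] {B : Matrix n n ℝ} {b : ℝ} (hb : 0 ≤ b)
    (hB : ∀ x : n → ℝ, √(∑ i, (B *ᵥ x) i ^ 2) ≤ b * √(∑ i, x i ^ 2))
    {W W' : Matrix m n ℝ} (hW : (1 - W * Wᵀ).PosSemidef) (hW' : (1 - W' * W'ᵀ).PosSemidef)
    {v : m → ℝ} (hv : ∑ i, v i ^ 2 = 1) :
    |v ⬝ᵥ (W * B * Wᵀ - W' * B * W'ᵀ) *ᵥ v| ≤ 2 * b * √(∑ i, ∑ j, (W i j - W' i j) ^ 2) := by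
  set s := √(∑ i, ∑ j, (W i j - W' i j) ^ 2)
  have hD : √(∑ j, (v ᵥ* (W - W')) j ^ 2) ≤ s :=
    Real.sqrt_le_sqrt ((sum_sq_vecMul_le v _).trans_eq (by simp [hv]))
  have hC : ∀ {X : Matrix m n ℝ}, (1 - X * Xᵀ).PosSemidef → √(∑ j, (v ᵥ* X) j ^ 2) ≤ 1 :=
    fun hX => Real.sqrt_le_one.mpr ((sum_sq_vecMul_le_of_posSemidef hX v).trans_eq hv)
  have hsplit : W * B * Wᵀ - W' * B * W'ᵀ = (W - W') * B * Wᵀ + W' * B * (W - W')ᵀ := by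
    simp only [Matrix.sub_mul, Matrix.mul_sub, transpose_sub]; abel
  rw [hsplit, add_mulVec, dotProduct_add]
  calc _ ≤ _ := abs_add_le _ _
    _ ≤ s * (b * 1) + 1 * (b * s) := by
      gcongr
      · exact (abs_dotProduct_mul_mul_transpose_mulVec_le hB _ _ v).trans
          (by gcongr; exact hC hW)
      · exact (abs_dotProduct_mul_mul_transpose_mulVec_le hB _ _ v).trans
          (by gcongr; exact hC hW')
    _ = 2 * b * s := by ring

lemma mul_mul_star_apply_self (M E : Matrix n n ℝ) (i : n) :
    (M * E * star M) i i = M i ⬝ᵥ E *ᵥ M i := by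
  rw [dotProduct_mulVec, mul_apply_eq_vecMul, star_eq_conjTranspose,
    conjTranspose_eq_transpose_of_trivial, vecMul_transpose, mul_apply_eq_vecMul]
  exact dotProduct_comm _ _

lemma sum_sq_apply_eq_one_of_mem_orthogonalGroup [DecidableEq n] {U : Matrix n n ℝ}
    (hU : U ∈ orthogonalGroup n ℝ) (i : n) : ∑ j, U i j ^ 2 = 1 := by
  simpa [mul_apply, sq] using congrFun₂ (mem_orthogonalGroup_iff _ _ |>.mp hU) i i

lemma abs_mul_add_mul_star_apply_sub_le [DecidableEq n] {B : Matrix n n ℝ} {b : ℝ} (hb : 0 ≤ b)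
    (hB : ∀ x : n → ℝ, √(∑ i, (B *ᵥ x) i ^ 2) ≤ b * √(∑ i, x i ^ 2))
    {W W' : Matrix n n ℝ} (hW : (1 - W * Wᵀ).PosSemidef) (hW' : (1 - W' * W'ᵀ).PosSemidef)
    {U : Matrix n n ℝ} (hU : U ∈ orthogonalGroup n ℝ) (A : Matrix n n ℝ) (k : n) :
    |(U * (A + W * B * Wᵀ) * star U) k k - (U * (A + W' * B * W'ᵀ) * star U) k k|
      ≤ 2 * b * √(∑ i, ∑ j, (W i j - W' i j) ^ 2) := by
  rw [mul_mul_star_apply_self, mul_mul_star_apply_self, ← dotProduct_sub, ← sub_mulVec,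
    add_sub_add_left_eq_sub]
  exact abs_dotProduct_sub_mulVec_le hb hB hW hW'
    (sum_sq_apply_eq_one_of_mem_orthogonalGroup hU k)

end QuadraticForm

section LogIntegralExp

variable {α : Type*} [MeasurableSpace α] {μ : Measure α} [NeZero μ] {f g : α → ℝ} {c : ℝ}

lemma log_integral_exp_sub_log_integral_exp_le (hf : Integrable (fun x => exp (f x)) μ)
    (hg : Integrable (fun x => exp (g x)) μ) (h : ∀ x, f x - g x ≤ c) :
    log (∫ x, exp (f x) ∂μ) - log (∫ x, exp (g x) ∂μ) ≤ c := by
  have hmono : ∫ x, exp (f x) ∂μ ≤ exp c * ∫ x, exp (g x) ∂μ := by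
    rw [← integral_const_mul]
    refine integral_mono hf (hg.const_mul _) fun x => ?_
    rw [← exp_add]
    exact exp_le_exp.mpr (by linarith [h x])
  have hlog := log_le_log (integral_exp_pos hf) hmono
  rw [log_mul (exp_ne_zero c) (integral_exp_pos hg).ne', log_exp] at hlog
  linarith

lemma abs_log_integral_exp_sub_log_integral_exp_le (hf : Integrable (fun x => exp (f x)) μ)
    (hg : Integrable (fun x => exp (g x)) μ) (h : ∀ x, |f x - g x| ≤ c) :
    |log (∫ x, exp (f x) ∂μ) - log (∫ x, exp (g x) ∂μ)| ≤ c :=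
  abs_sub_le_iff.mpr
    ⟨log_integral_exp_sub_log_integral_exp_le hf hg fun x => (abs_le.mp (h x)).2,
      log_integral_exp_sub_log_integral_exp_le hg hf fun x => by linarith [(abs_le.mp (h x)).1]⟩

end LogIntegralExp

lemma integrable_exp_mul_mul_star_apply {N : ℕ} (μ : Measure (orthogonalGroup (Fin N) ℝ))
    [IsFiniteMeasure μ] (c : ℝ) (E : Matrix (Fin N) (Fin N) ℝ) (k : Fin N) :
    Integrable (fun U : orthogonalGroup (Fin N) ℝ =>
      exp (c * ((U : Matrix (Fin N) (Fin N) ℝ) * E * star (U : Matrix (Fin N) (Fin N) ℝ)) k k))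
      μ := by
  refine .of_bound (Continuous.aestronglyMeasurable (by fun_prop))
    (exp (|c| * √(∑ i, ∑ j, E i j ^ 2))) (ae_of_all _ fun U => ?_)
  rw [norm_of_nonneg (exp_pos _).le, exp_le_exp, mul_mul_star_apply_self]
  calc _ ≤ |c * (U.1 k ⬝ᵥ E *ᵥ U.1 k)| := le_abs_self _
    _ ≤ _ := by
      rw [abs_mul]
      gcongr
      exact abs_dotProduct_mulVec_le_of_sum_sq_eq_one E
        (sum_sq_apply_eq_one_of_mem_orthogonalGroup U.2 k)

theorem spherical_integral_lipschitz_in_contraction_general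
    (N : ℕ) [NeZero N]
    (m : Measure (Matrix.orthogonalGroup (Fin N) ℝ)) [IsProbabilityMeasure m]
    (θ b : ℝ) (hθ : 0 < θ) (hb : 0 ≤ b)
    (A B : Matrix (Fin N) (Fin N) ℝ)
    (hBnorm : ∀ x : Fin N → ℝ,
      Real.sqrt (∑ i, (B.mulVec x i) ^ 2) ≤ b * Real.sqrt (∑ i, (x i) ^ 2))
    (W W' : Matrix (Fin N) (Fin N) ℝ)
    (hW : (1 - W * Wᵀ).PosSemidef) (hW' : (1 - W' * W'ᵀ).PosSemidef) :
    |(1 / (N : ℝ)) * Real.log (∫ U, Real.exp (θ * (N : ℝ) *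
          (((U : Matrix (Fin N) (Fin N) ℝ) * (A + W * B * Wᵀ) *
            star (U : Matrix (Fin N) (Fin N) ℝ)) 0 0)) ∂m)
      - (1 / (N : ℝ)) * Real.log (∫ U, Real.exp (θ * (N : ℝ) *
          (((U : Matrix (Fin N) (Fin N) ℝ) * (A + W' * B * W'ᵀ) *
            star (U : Matrix (Fin N) (Fin N) ℝ)) 0 0)) ∂m)|
      ≤ 2 * θ * b * Real.sqrt (∑ i, ∑ j, (W i j - W' i j) ^ 2) := by
  have hN : (0 : ℝ) < N := Nat.cast_pos.mpr (NeZero.pos N)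
  have hlog := abs_log_integral_exp_sub_log_integral_exp_le
    (integrable_exp_mul_mul_star_apply m (θ * N) (A + W * B * Wᵀ) 0)
    (integrable_exp_mul_mul_star_apply m (θ * N) (A + W' * B * W'ᵀ) 0) fun U => by
      rw [← mul_sub, abs_mul, abs_of_pos (by positivity)]
      exact mul_le_mul_of_nonneg_left
        (abs_mul_add_mul_star_apply_sub_le hb hBnorm hW hW' U.2 A 0) (by positivity)
  rw [← mul_sub, abs_mul, abs_of_pos (by positivity)]
  calc _ ≤ 1 / (N : ℝ) * (θ * N * (2 * b * √(∑ i, ∑ j, (W i j - W' i j) ^ 2))) := by gcongr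
    _ = _ := by field_simp

/-- The map `V ↦ N⁻¹ log I_N(θ, A + V B V*)` is Lipschitz on the set of `N×N`
contractions: for `W, W̃` with `W W* ≤ I` and `W̃ W̃* ≤ I`,
`|N⁻¹ log I_N(θ, A + W B Wᵀ) − N⁻¹ log I_N(θ, A + W̃ B W̃ᵀ)|
   ≤ 2θ‖B‖_∞ (Σ_{i,j} |w_{ij} − w̃_{ij}|²)^{1/2}`,
where `I_N(θ,E) = ∫ e^{θ N (UEU*)_{11}} dm_N^{(1)}(U)` and `m_N^{(1)}` is the
Haar (probability) measure on `O(N)`; `‖B‖_∞ ≤ b` is the operator norm. -/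
theorem spherical_integral_lipschitz_in_contraction
    (N : ℕ) [NeZero N]
    (m : Measure (Matrix.orthogonalGroup (Fin N) ℝ)) [IsProbabilityMeasure m]
    (θ b : ℝ) (hθ : 0 < θ) (hb : 0 ≤ b)
    (A B : Matrix (Fin N) (Fin N) ℝ) (hA : A.IsHermitian) (hB : B.IsHermitian)
    (hBnorm : ∀ x : Fin N → ℝ,
      Real.sqrt (∑ i, (B.mulVec x i) ^ 2) ≤ b * Real.sqrt (∑ i, (x i) ^ 2))
    (W W' : Matrix (Fin N) (Fin N) ℝ)
    (hW : (1 - W * Wᵀ).PosSemidef) (hW' : (1 - W' * W'ᵀ).PosSemidef) :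
    |(1 / (N : ℝ)) * Real.log (∫ U, Real.exp (θ * (N : ℝ) *
          (((U : Matrix (Fin N) (Fin N) ℝ) * (A + W * B * Wᵀ) *
            star (U : Matrix (Fin N) (Fin N) ℝ)) 0 0)) ∂m)
      - (1 / (N : ℝ)) * Real.log (∫ U, Real.exp (θ * (N : ℝ) *
          (((U : Matrix (Fin N) (Fin N) ℝ) * (A + W' * B * W'ᵀ) *
            star (U : Matrix (Fin N) (Fin N) ℝ)) 0 0)) ∂m)|
      ≤ 2 * θ * b * Real.sqrt (∑ i, ∑ j, (W i j - W' i j) ^ 2) :=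
  spherical_integral_lipschitz_in_contraction_general N m θ b hθ hb A B hBnorm W W' hW hW'
end
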